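/- arXiv:0803.2504 — 3 statements merged into one kernel-verified Lean document; each statement's English description precedes it below -/
import Mathlib

section
/- Let $p,q$ be coprime positive integers with $p<q$ and let $a$ be a positive integer with $m=(q-p)a$. Then the monoid $M^+ = \{(i,j)\in\mathbb{Z}_{\ge 0}^2 : qj \le pi,\ m \mid (i-j)\}$ is generated by the $ap+1$ elements $(m,0),(m+1,1),(m+2,2),\ldots,(aq,ap)$. -/
/-- The monoid `M^+` as a set of pairs of integers. -/
def Mplus (p q m : ℕ) : Set (ℤ × ℤ) :=
  {v | 0 ≤ v.1 ∧ 0 ≤ v.2 ∧ (q : ℤ) * v.2 ≤ (p : ℤ) * v.1 ∧ (m : ℤ) ∣ (v.1 - v.2)}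

/-!
`M⁺` is closed under addition, and each generator `(m + t, t)` with `t ≤ a p` satisfies
`q t ≤ p (m + t)` because `m = (q - p) a`; this gives one inclusion. Conversely, take `(i, j) ∈ M⁺`.
If `j > a p`, then `(i, j) - (a q, a p)` is again in `M⁺`, since `q (j - a p) ≤ p (i - a q)` is just
`q j ≤ p i`, and we recurse on `j`. If `0 < j ≤ a p`, then `p < q` forces `j < i`, so `m ≤ i - j`
and `(i, j) = (m + j, j) + (i - j - m, 0)`. Finally `(i, 0)` with `m ∣ i` is a multiple of `(m, 0)`.
-/

namespace Mplus

def generators (m n : ℕ) : Set (ℤ × ℤ) :=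
  {v | ∃ t : ℕ, t ≤ n ∧ v = ((m : ℤ) + t, (t : ℤ))}

def addSubmonoid (p q m : ℕ) : AddSubmonoid (ℤ × ℤ) where
  carrier := Mplus p q m
  zero_mem' := ⟨le_rfl, le_rfl, by simp, by simp⟩
  add_mem' := by
    rintro ⟨i, j⟩ ⟨i', j'⟩ ⟨hi, hj, hqp, hdvd⟩ ⟨hi', hj', hqp', hdvd'⟩
    refine ⟨add_nonneg hi hi', add_nonneg hj hj', ?_, ?_⟩
    · simpa only [Prod.mk_add_mk, mul_add] using add_le_add hqp hqp'
    · simpa only [Prod.mk_add_mk, add_sub_add_comm] using dvd_add hdvd hdvd'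

variable {p q a m : ℕ}

theorem lt_of_mem (hpq : p < q) {v : ℤ × ℤ} (hv : v ∈ Mplus p q m) (hv₂ : 0 < v.2) :
    v.2 < v.1 := by
  obtain ⟨hv₁, -, hqp, -⟩ := hv
  have hpq' : (p : ℤ) < q := by exact_mod_cast hpq
  nlinarith

theorem generators_subset (hpq : p < q) (hm : m = (q - p) * a) :
    generators m (a * p) ⊆ Mplus p q m := by
  rintro _ ⟨t, ht, rfl⟩
  have hm' : (m : ℤ) = (q - p) * a := by rw [hm]; push_cast [hpq.le]; ring
  have ht' : (t : ℤ) ≤ a * p := by exact_mod_cast ht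
  have hpq' : (0 : ℤ) ≤ q - p := by linarith [(by exact_mod_cast hpq : (p : ℤ) < q)]
  refine ⟨by positivity, by positivity, ?_, by simp⟩
  -- `p (m + t) - q t = (q - p) (a p - t)`
  nlinarith [mul_nonneg hpq' (sub_nonneg.mpr ht')]

theorem sub_generator_mem (hpq : p < q) (hm : m = (q - p) * a) {v : ℤ × ℤ} (hv : v ∈ Mplus p q m)
    (hv₂ : ((a * p : ℕ) : ℤ) < v.2) :
    v - ((m : ℤ) + (a * p : ℕ), ((a * p : ℕ) : ℤ)) ∈ Mplus p q m := by
  obtain ⟨i, j⟩ := v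
  obtain ⟨-, -, hqp, hdvd⟩ := hv
  have hm' : (m : ℤ) + a * p = a * q := by rw [hm]; push_cast [hpq.le]; ring
  have hq : (0 : ℤ) < q := by exact_mod_cast (Nat.zero_le p).trans_lt hpq
  push_cast at hv₂ ⊢
  rw [hm', Prod.mk_sub_mk]
  have key : (q : ℤ) * (j - a * p) ≤ p * (i - a * q) := by linarith
  refine ⟨?_, by linarith, key, ?_⟩
  · nlinarith [mul_pos hq (sub_pos.mpr hv₂)]
  · have : i - a * q - (j - a * p) = i - j - m := by linarith
    rw [this]
    exact dvd_sub hdvd dvd_rfl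

theorem mk_zero_mem_closure {n : ℕ} {i : ℤ} (hi : 0 ≤ i) (hdvd : (m : ℤ) ∣ i) :
    (i, (0 : ℤ)) ∈ AddSubmonoid.closure (generators m n) := by
  lift i to ℕ using hi
  obtain ⟨k, rfl⟩ := Int.natCast_dvd_natCast.mp hdvd
  have hgen : ((m : ℤ), (0 : ℤ)) ∈ generators m n := ⟨0, Nat.zero_le n, by simp⟩
  convert AddSubmonoid.nsmul_mem _ (AddSubmonoid.subset_closure hgen) k using 1
  simp [mul_comm]

theorem mem_closure_of_snd_le (hpq : p < q) {n : ℕ} {v : ℤ × ℤ} (hv : v ∈ Mplus p q m)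
    (hv₂ : v.2 ≤ n) : v ∈ AddSubmonoid.closure (generators m n) := by
  obtain ⟨i, j⟩ := v
  obtain rfl | hj := hv.2.1.eq_or_lt
  · exact mk_zero_mem_closure hv.1 (by simpa using hv.2.2.2)
  lift j to ℕ using hj.le
  have hlt : (j : ℤ) < i := lt_of_mem hpq hv hj
  have hmle : (m : ℤ) ≤ i - j := Int.le_of_dvd (by linarith) hv.2.2.2
  have hsplit : (i, (j : ℤ)) = ((m : ℤ) + j, (j : ℤ)) + (i - j - m, 0) := by
    ext <;> simp only [Prod.fst_add, Prod.snd_add] <;> ring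
  rw [hsplit]
  refine add_mem (AddSubmonoid.subset_closure ⟨j, Int.ofNat_le.mp hv₂, rfl⟩)
    (mk_zero_mem_closure (by linarith) ?_)
  exact (show i - j - m = (i - j) - m by ring) ▸ dvd_sub hv.2.2.2 dvd_rfl

theorem mem_closure_of_mem (hp : 0 < p) (ha : 0 < a) (hpq : p < q) (hm : m = (q - p) * a)
    {v : ℤ × ℤ} (hv : v ∈ Mplus p q m) : v ∈ AddSubmonoid.closure (generators m (a * p)) := by
  by_cases hv₂ : v.2 ≤ (a * p : ℕ)
  · exact mem_closure_of_snd_le hpq hv hv₂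
  set g : ℤ × ℤ := ((m : ℤ) + (a * p : ℕ), ((a * p : ℕ) : ℤ))
  have hrest := sub_generator_mem hpq hm hv (not_le.mp hv₂)
  rw [← add_sub_cancel g v]
  exact add_mem (AddSubmonoid.subset_closure ⟨a * p, le_rfl, rfl⟩)
    (mem_closure_of_mem hp ha hpq hm hrest)
termination_by v.2.toNat
decreasing_by
  have hap : 0 < a * p := Nat.mul_pos ha hp
  simp only [Prod.snd_sub]
  omega

end Mplus

theorem stmt_2_general (p q a m : ℕ) (hp : 0 < p) (ha : 0 < a) (hpq : p < q) (hm : m = (q - p) * a) :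
    Mplus p q m =
      (AddSubmonoid.closure {v : ℤ × ℤ | ∃ t : ℕ, t ≤ a * p ∧ v = ((m : ℤ) + t, (t : ℤ))} :
        Set (ℤ × ℤ)) :=
  Set.Subset.antisymm (fun _ ↦ Mplus.mem_closure_of_mem hp ha hpq hm) <|
    (AddSubmonoid.closure_le (S := Mplus.addSubmonoid p q m)).mpr (Mplus.generators_subset hpq hm)

theorem stmt_2 (p q a m : ℕ) (hp : 0 < p) (hq : 0 < q) (ha : 0 < a)
    (hco : Nat.Coprime p q) (hpq : p < q) (hm : m = (q - p) * a) :
    Mplus p q m =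
      (AddSubmonoid.closure {v : ℤ × ℤ | ∃ t : ℕ, t ≤ a * p ∧ v = ((m : ℤ) + t, (t : ℤ))} :
        Set (ℤ × ℤ)) :=
  stmt_2_general p q a m hp ha hpq hm
end

section
/- Let $b \ge 1$ be an integer. The polynomial $Y_0^b - X_1X_4 + X_2X_3$ is irreducible in $\mathbb{C}[Y_0,X_1,X_2,X_3,X_4]$. -/
/-!
The polynomial is linear in `X₁`, `-X₄ * X₁ + (Y₀ ^ b + X₂ * X₃)`, with coefficients free of
`X₁`. They are relatively prime: `X₄` is prime and does not divide `Y₀ ^ b + X₂ * X₃`, which takes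
the value `2` at `X₄ = 0` and all other variables `1`. A linear polynomial with relatively prime
coefficients over a domain is irreducible.
-/

open MvPolynomial

/-- The polynomial `Y₀^b - X₁X₄ + X₂X₃` in `ℂ[Y₀,X₁,X₂,X₃,X₄]`,
with variable `0` playing the role of `Y₀` and variable `i` that of `Xᵢ`. -/
noncomputable def hypersurfacePoly (b : ℕ) : MvPolynomial (Fin 5) ℂ :=
  X 0 ^ b - X 1 * X 4 + X 2 * X 3

theorem MvPolynomial.eval_eq_zero_of_X_dvd {σ R : Type*} [CommSemiring R] {i : σ}
    {p : MvPolynomial σ R} {x : σ → R} (hx : x i = 0) (h : X i ∣ p) : eval x p = 0 := by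
  obtain ⟨q, rfl⟩ := h
  simp [hx]

theorem stmt_4_general (b : ℕ) : Irreducible (hypersurfacePoly b) := by
  have hsplit : hypersurfacePoly b = -X 4 * X 1 + (X 0 ^ b + X 2 * X 3) := by
    rw [hypersurfacePoly]
    ring
  have hvars : (1 : Fin 5) ∉ (X 0 ^ b + X 2 * X 3 : MvPolynomial (Fin 5) ℂ).vars := fun h => by
    rcases Finset.mem_union.1 (vars_add_subset _ _ h) with h | h
    · simpa using vars_pow _ _ h
    · simpa [Fin.ext_iff] using vars_mul _ _ h
  have hndvd : ¬ (X 4 : MvPolynomial (Fin 5) ℂ) ∣ X 0 ^ b + X 2 * X 3 := fun h => by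
    have := eval_eq_zero_of_X_dvd (x := Function.update 1 4 0) (by simp) h
    norm_num [Function.update_apply, Fin.ext_iff] at this
  rw [hsplit]
  refine irreducible_mul_X_add _ _ 1 (neg_ne_zero.2 (X_ne_zero 4)) (by simp) hvars ?_
  exact (X_prime.irreducible.isRelPrime_iff_not_dvd.2 hndvd).neg_left

theorem stmt_4 (b : ℕ) (hb : 1 ≤ b) : Irreducible (hypersurfacePoly b) :=
  stmt_4_general b
end

section
/- Let $b \ge 1$ be an integer. The quotient ring $R = \mathbb{C}[Y_0,X_1,X_2,X_3,X_4]/(Y_0^b - X_1X_4 + X_2X_3)$ is a unique factorization domain. -/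
open MvPolynomial

/-- The coordinate ring `R = ℂ[Y₀,X₁,X₂,X₃,X₄]/(Y₀^b - X₁X₄ + X₂X₃)` of `H_b`. -/
noncomputable def hypersurfaceRing (b : ℕ) : Type :=
  MvPolynomial (Fin 5) ℂ ⧸ Ideal.span {hypersurfacePoly b}

noncomputable instance (b : ℕ) : CommRing (hypersurfaceRing b) :=
  Ideal.Quotient.commRing _

/-!
Eliminating `X₄` presents `R` as `A[T]/(aT + c)` with `A = ℂ[Y₀,X₁,X₂,X₃]`, `a = -X₁`
and `c = Y₀^b + X₂X₃`. Over a Noetherian UFD `A`, with `a` prime, `a ∤ c` and `(a, c)`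
a prime ideal, such a ring is a domain in which `a` stays prime, and inverting `a` gives
back the UFD `A[1/a]` (the root becomes `-c/a`); Nagata's criterion then makes it a UFD.
The ideal `(X₁, Y₀^b + X₂X₃)` is prime because `Y₀^b + X₂X₃`, linear in `X₃`, is prime
and does not involve `X₁`.
-/

open scoped Polynomial

namespace AdjoinRoot

-- `MvPolynomial` is open, so plain `C` and `X` would be ambiguous.
local notation "C" => Polynomial.C
local notation "X" => Polynomial.X

variable {A : Type*} [CommRing A]

section

variable (a c : A)

theorem of_mul_root_add_of_eq_zero :
    of (C a * X + C c) a * root (C a * X + C c) + of (C a * X + C c) c = 0 := by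
  rw [← mk_C, ← mk_C, ← mk_X, ← map_mul, ← map_add, mk_self]

open IsLocalization.Away

noncomputable def toLocalizationAway : AdjoinRoot (C a * X + C c) →+* Localization.Away a :=
  lift (algebraMap A _) (-algebraMap A _ c * invSelf a) (by
    simp only [Polynomial.eval₂_add, Polynomial.eval₂_mul, Polynomial.eval₂_C,
      Polynomial.eval₂_X]
    linear_combination (-algebraMap A (Localization.Away a) c) *
      mul_invSelf (S := Localization.Away a) a)

noncomputable def localizationAwayEquiv :
    Localization.Away (of (C a * X + C c) a) ≃+* Localization.Away a := by
  set ι := algebraMap (AdjoinRoot (C a * X + C c)) (Localization.Away (of (C a * X + C c) a))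
  set φ := IsLocalization.Away.lift (of (C a * X + C c) a)
    (S := Localization.Away (of (C a * X + C c) a)) (g := toLocalizationAway a c)
    (by simpa [toLocalizationAway] using algebraMap_isUnit a)
  set ψ := IsLocalization.Away.lift a (S := Localization.Away a) (g := ι.comp (of _))
    (algebraMap_isUnit (of (C a * X + C c) a))
  refine RingEquiv.ofRingHom φ ψ ?_ ?_
  · apply IsLocalization.ringHom_ext (Submonoid.powers a)
    ext x
    simp [ι, φ, ψ, toLocalizationAway]
  · apply IsLocalization.ringHom_ext (Submonoid.powers (of (C a * X + C c) a))
    ext x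
    · simp [ι, φ, ψ, toLocalizationAway]
    · have hu := congrArg ψ (mul_invSelf (S := Localization.Away a) a)
      rw [map_mul, map_one, IsLocalization.Away.lift_eq, RingHom.comp_apply] at hu
      have hr := congrArg ι (of_mul_root_add_of_eq_zero a c)
      rw [map_add, map_mul, map_zero] at hr
      simp only [toLocalizationAway, neg_mul, RingHom.coe_comp, Function.comp_apply, lift_eq,
        lift_root, map_neg, map_mul, RingHomCompTriple.comp_eq, ψ, ι, φ]
      linear_combination (-ψ (invSelf a)) * hr + ι (root _) * hu

end

variable {a c : A}

theorem of_dvd_mk_iff (x : A[X]) :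
    of (C a * X + C c) a ∣ mk (C a * X + C c) x ↔ x ∈ Ideal.span {C a, C c} := by
  constructor
  · rintro ⟨y, hy⟩
    obtain ⟨y, rfl⟩ := mk_surjective y
    obtain ⟨k, hk⟩ := mk_eq_mk.mp (hy.trans (by rw [← mk_C, ← map_mul]))
    exact Ideal.mem_span_pair.mpr ⟨y + X * k, k, by linear_combination -hk⟩
  · intro hx
    obtain ⟨u, v, rfl⟩ := Ideal.mem_span_pair.mp hx
    refine ⟨mk _ u - mk _ v * root _, ?_⟩
    simp only [map_add, map_mul, mk_C]
    linear_combination (mk _ v) * of_mul_root_add_of_eq_zero a c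

theorem prime_of_isPrime_span_pair [IsDomain A] (ha : a ≠ 0)
    (hac : (Ideal.span {a, c}).IsPrime) : Prime (of (C a * X + C c) a) := by
  have hP : (Ideal.span {C a, C c} : Ideal A[X]).IsPrime := by
    simpa [Ideal.map_span, Set.image_pair] using
      Ideal.isPrime_map_C_of_isPrime (P := Ideal.span {a, c})
  refine ⟨fun h0 => ?_, fun hu => ?_, fun x y hxy => ?_⟩
  · rw [← mk_C, mk_eq_zero] at h0
    have := Polynomial.natDegree_le_of_dvd h0 (Polynomial.C_ne_zero.mpr ha)
    rw [Polynomial.natDegree_linear ha, Polynomial.natDegree_C] at this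
    exact one_ne_zero (Nat.le_zero.mp this)
  · have h1 := (of_dvd_mk_iff 1).mp (by simpa using hu.dvd)
    exact hP.ne_top ((Ideal.eq_top_iff_one _).mpr h1)
  · obtain ⟨x, rfl⟩ := mk_surjective x
    obtain ⟨y, rfl⟩ := mk_surjective y
    rw [← map_mul, of_dvd_mk_iff] at hxy
    simpa only [of_dvd_mk_iff] using hP.mem_or_mem hxy

variable [IsDomain A] [UniqueFactorizationMonoid A]

theorem isDomain_C_mul_X_add_C (ha : Prime a) (hac : ¬ a ∣ c) :
    IsDomain (AdjoinRoot (C a * X + C c)) :=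
  isDomain_of_prime <| (Polynomial.irreducible_C_mul_X_add_C ha.ne_zero
    (ha.irreducible.isRelPrime_iff_not_dvd.mpr hac)).prime

theorem uniqueFactorizationMonoid_C_mul_X_add_C [IsNoetherianRing A] (ha : Prime a)
    (hac : ¬ a ∣ c) (hI : (Ideal.span {a, c}).IsPrime) :
    UniqueFactorizationMonoid (AdjoinRoot (C a * X + C c)) := by
  have := isDomain_C_mul_X_add_C ha hac
  rw [UniqueFactorizationMonoid.iff_localizationAway_of_prime
    (prime_of_isPrime_span_pair ha.ne_zero hI)]
  exact (localizationAwayEquiv a c).symm.toMulEquiv.uniqueFactorizationMonoid inferInstance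

end AdjoinRoot

namespace MvPolynomial

variable {σ R : Type*} [CommRing R] [DecidableEq σ]

theorem X_dvd_sub_aeval_update_zero (i : σ) (p : MvPolynomial σ R) :
    X i ∣ p - aeval (Function.update X i 0) p := by
  rw [← Ideal.mem_span_singleton, ← Ideal.Quotient.eq]
  have : (Ideal.Quotient.mk (Ideal.span {X i})).comp
      (aeval (Function.update X i (0 : MvPolynomial σ R))).toRingHom = Ideal.Quotient.mk _ := by
    ext j
    · simp
    · by_cases hj : j = i
      · subst hj; simp
      · simp [hj]
  exact (RingHom.congr_fun this p).symm

theorem isPrime_span_X_pair {i : σ} {c : MvPolynomial σ R} (hc : Prime c)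
    (hci : aeval (Function.update X i 0) c = c) : (Ideal.span {X i, c}).IsPrime := by
  have hspan : Ideal.span {X i, c} =
      (Ideal.span {c}).comap (aeval (Function.update X i (0 : MvPolynomial σ R))) := by
    ext z
    simp only [Ideal.mem_comap, Ideal.mem_span_singleton, Ideal.mem_span_pair]
    constructor
    · rintro ⟨u, v, rfl⟩
      refine ⟨aeval (Function.update X i 0) v, ?_⟩
      rw [map_add, map_mul, map_mul, hci, aeval_X, Function.update_self]
      ring
    · rintro ⟨w, hw⟩
      obtain ⟨t, ht⟩ := X_dvd_sub_aeval_update_zero i z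
      exact ⟨t, w, by linear_combination -ht - hw⟩
  have := (Ideal.span_singleton_prime hc.ne_zero).mpr hc
  rw [hspan]
  infer_instance

end MvPolynomial

theorem optionEquivLeft_rename_hypersurfacePoly (b : ℕ) :
    optionEquivLeft ℂ (Fin 4) (rename (finSuccEquiv' 4) (hypersurfacePoly b)) =
      Polynomial.C (-X 1) * Polynomial.X + Polynomial.C (X 0 ^ b + X 2 * X 3) := by
  simp only [hypersurfacePoly, map_add, map_sub, map_mul, map_pow, map_neg, rename_X,
    finSuccEquiv'_at, optionEquivLeft_X_some, optionEquivLeft_X_none,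
    show finSuccEquiv' (4 : Fin 5) 0 = some 0 by decide,
    show finSuccEquiv' (4 : Fin 5) 1 = some 1 by decide,
    show finSuccEquiv' (4 : Fin 5) 2 = some 2 by decide,
    show finSuccEquiv' (4 : Fin 5) 3 = some 3 by decide]
  ring

noncomputable def hypersurfaceRingEquiv (b : ℕ) :
    hypersurfaceRing b ≃+* AdjoinRoot (Polynomial.C (-X 1) * Polynomial.X +
      Polynomial.C (X 0 ^ b + X 2 * X 3 : MvPolynomial (Fin 4) ℂ)) :=
  Ideal.quotientEquiv _ _
    ((renameEquiv ℂ (finSuccEquiv' 4)).trans (optionEquivLeft ℂ (Fin 4))).toRingEquiv <| by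
      rw [Ideal.map_span, Set.image_singleton]
      exact congrArg _ (congrArg _ (optionEquivLeft_rename_hypersurfacePoly b).symm)

theorem prime_X_zero_pow_add_X_two_mul_X_three (b : ℕ) :
    Prime (X 0 ^ b + X 2 * X 3 : MvPolynomial (Fin 4) ℂ) := by
  rw [← MulEquiv.prime_iff
    ((renameEquiv ℂ (finSuccEquiv' 3)).trans (optionEquivLeft ℂ (Fin 3))).toMulEquiv]
  have h : optionEquivLeft ℂ (Fin 3) (rename (finSuccEquiv' 3) (X 0 ^ b + X 2 * X 3)) =
      Polynomial.C (X 2) * Polynomial.X + Polynomial.C (X 0 ^ b) := by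
    simp only [map_add, map_mul, map_pow, rename_X, finSuccEquiv'_at, optionEquivLeft_X_some,
      optionEquivLeft_X_none, show finSuccEquiv' (3 : Fin 4) 0 = some 0 by decide,
      show finSuccEquiv' (3 : Fin 4) 2 = some 2 by decide]
    ring
  have hdvd : ¬ (X 2 : MvPolynomial (Fin 3) ℂ) ∣ X 0 ^ b := by
    rintro ⟨q, hq⟩
    simpa using congrArg (eval fun i => if i = 2 then 0 else 1) hq
  exact h ▸ (Polynomial.irreducible_C_mul_X_add_C (X_ne_zero 2)
    (X_prime.irreducible.isRelPrime_iff_not_dvd.mpr hdvd)).prime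

theorem isPrime_span_neg_X_one_pair (b : ℕ) :
    (Ideal.span {-X 1, X 0 ^ b + X 2 * X 3} : Ideal (MvPolynomial (Fin 4) ℂ)).IsPrime := by
  rw [Ideal.span_insert, Ideal.span_singleton_neg, ← Ideal.span_insert]
  exact isPrime_span_X_pair (prime_X_zero_pow_add_X_two_mul_X_three b) (by simp [Function.update])

theorem stmt_5_general (b : ℕ) :
    ∃ h : IsDomain (hypersurfaceRing b),
      @UniqueFactorizationMonoid (hypersurfaceRing b)
        (inferInstance : CommMonoidWithZero (hypersurfaceRing b)) := by
  have ha : Prime (-X 1 : MvPolynomial (Fin 4) ℂ) := X_prime.neg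
  have hac : ¬ (-X 1 : MvPolynomial (Fin 4) ℂ) ∣ X 0 ^ b + X 2 * X 3 := by
    rw [neg_dvd]
    rintro ⟨q, hq⟩
    simpa using congrArg (eval fun i => if i = 1 then 0 else 1) hq
  have := AdjoinRoot.isDomain_C_mul_X_add_C ha hac
  exact ⟨(hypersurfaceRingEquiv b).toMulEquiv.isDomain _,
    (hypersurfaceRingEquiv b).symm.toMulEquiv.uniqueFactorizationMonoid
      (AdjoinRoot.uniqueFactorizationMonoid_C_mul_X_add_C ha hac (isPrime_span_neg_X_one_pair b))⟩

theorem stmt_5 (b : ℕ) (hb : 1 ≤ b) :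
    ∃ h : IsDomain (hypersurfaceRing b),
      @UniqueFactorizationMonoid (hypersurfaceRing b)
        (inferInstance : CommMonoidWithZero (hypersurfaceRing b)) :=
  stmt_5_general b
end
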